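/- (Corollary 2, min–max version.) Let s₀ ∈ E and assume x⁺ i ≠ x⁻ j for all indices i, j. With ρ̄(s₀, x⁺ i, x⁻ j) = (β_j − ‖s₀ − x⁻ j‖² + ‖s₀ − x⁺ i‖²) / (2 * ‖x⁻ j − x⁺ i‖), define r_u* = min over i of (max over j of ρ̄(s₀, x⁺ i, x⁻ j)). Then every point in the open Euclidean ball of radius r_u* around s₀ is free: for all x ∈ E with ‖x − s₀‖ < r_u*, F(x) < 0. Moreover, for every fixed index j₀, the radius r_u = min over i of ρ̄(s₀, x⁺ i, x⁻ j₀) satisfies r_u ≤ r_u*, so the ball B(s₀, r_u) is contained in B(s₀, r_u*). -/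

import Mathlib

/-!
Fix `x` with `‖x - s₀‖ < r_u*`. For every positive support vector `x⁺ i` the max over `j` in
`r_u*` yields a negative support vector `x⁻ j` with `‖x - s₀‖ < ρ̄(s₀, x⁺ i, x⁻ j)`. Expanding
the squares around `s₀` and applying Cauchy–Schwarz, this forces
`‖x - x⁻ j‖² - ‖x - x⁺ i‖² < β_j`, i.e. `(∑ α⁺) k(x⁺ i, x) < α⁻ j k(x⁻ j, x)`. So every
positive kernel value is below `(∑ α⁻ k(x⁻, x)) / ∑ α⁺`, and averaging with the weights `α⁺`
gives `F x < 0`.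
-/

open Real

section RBF

variable {E : Type*} [NormedAddCommGroup E] [InnerProductSpace ℝ E]

theorem norm_sub_sq_sub_norm_sub_sq_le (x s p m : E) :
    ‖x - m‖ ^ 2 - ‖x - p‖ ^ 2 ≤ ‖s - m‖ ^ 2 - ‖s - p‖ ^ 2 + 2 * (‖x - s‖ * ‖m - p‖) := by
  have hm : ‖x - m‖ ^ 2 = ‖x - s‖ ^ 2 + 2 * inner ℝ (x - s) (s - m) + ‖s - m‖ ^ 2 := by
    rw [← norm_add_sq_real, sub_add_sub_cancel]
  have hp : ‖x - p‖ ^ 2 = ‖x - s‖ ^ 2 + 2 * inner ℝ (x - s) (s - p) + ‖s - p‖ ^ 2 := by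
    rw [← norm_add_sq_real, sub_add_sub_cancel]
  have hcs : inner ℝ (x - s) (s - m) - inner ℝ (x - s) (s - p) ≤ ‖x - s‖ * ‖m - p‖ := by
    rw [← inner_sub_right, sub_sub_sub_cancel_left, norm_sub_rev m p]
    exact real_inner_le_norm _ _
  linarith

/-- For `m = p` the radius is the junk value `_ / 0 = 0`, so the claim is vacuous. -/
theorem norm_sub_sq_sub_norm_sub_sq_lt_of_lt_div {x s p m : E} {b : ℝ}
    (h : ‖x - s‖ < (b - ‖s - m‖ ^ 2 + ‖s - p‖ ^ 2) / (2 * ‖m - p‖)) :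
    ‖x - m‖ ^ 2 - ‖x - p‖ ^ 2 < b := by
  rcases (norm_nonneg (m - p)).eq_or_lt with hmp | hmp
  · rw [← hmp, mul_zero, div_zero] at h
    exact absurd h (norm_nonneg _).not_gt
  rw [lt_div_iff₀ (by positivity)] at h
  linarith [norm_sub_sq_sub_norm_sub_sq_le x s p m]

theorem mul_exp_neg_mul_lt_mul_exp_neg_mul {γ a b u v : ℝ} (hγ : 0 < γ) (ha : 0 < a)
    (hb : 0 < b) (h : v - u < 1 / γ * (log b - log a)) :
    a * exp (-γ * u) < b * exp (-γ * v) := by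
  rw [← exp_log ha, ← exp_log hb, ← exp_add, ← exp_add, exp_lt_exp]
  rw [one_div, inv_mul_eq_div, lt_div_iff₀ hγ] at h
  linarith

theorem mul_rbf_lt_mul_rbf {η γ a b : ℝ} (hη : 0 < η) (hγ : 0 < γ) (ha : 0 < a) (hb : 0 < b)
    {x s p m : E}
    (h : ‖x - s‖ < (1 / γ * (log b - log a) - ‖s - m‖ ^ 2 + ‖s - p‖ ^ 2) / (2 * ‖m - p‖)) :
    a * (η * exp (-γ * ‖p - x‖ ^ 2)) < b * (η * exp (-γ * ‖m - x‖ ^ 2)) := by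
  have hexp := mul_exp_neg_mul_lt_mul_exp_neg_mul hγ ha hb
    (norm_sub_sq_sub_norm_sub_sq_lt_of_lt_div h)
  rw [mul_left_comm, mul_left_comm b, norm_sub_rev p, norm_sub_rev m]
  exact mul_lt_mul_of_pos_left hexp hη

end RBF

theorem Finset.sum_mul_lt_of_forall_sum_mul_lt {ι : Type*} [Fintype ι] [Nonempty ι]
    {w f : ι → ℝ} {T : ℝ} (hw : ∀ i, 0 < w i) (h : ∀ i, (∑ j, w j) * f i < T) :
    ∑ i, w i * f i < T := by
  have hS : 0 < ∑ j, w j := Finset.sum_pos (fun i _ => hw i) Finset.univ_nonempty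
  have hf : ∀ i, f i < T / ∑ j, w j := fun i => by rw [lt_div_iff₀ hS, mul_comm]; exact h i
  calc ∑ i, w i * f i < ∑ i, w i * (T / ∑ j, w j) :=
        Finset.sum_lt_sum_of_nonempty Finset.univ_nonempty
          fun i _ => mul_lt_mul_of_pos_left (hf i) (hw i)
    _ = T := by rw [← Finset.sum_mul, mul_div_cancel₀ _ hS.ne']

theorem ball_free_ru_star_general
    (d Mp Mm : ℕ) (hMp : 0 < Mp) (hMm : 0 < Mm)
    (η γ : ℝ) (hη : 0 < η) (hγ : 0 < γ)
    (xp : Fin Mp → EuclideanSpace ℝ (Fin d)) (αp : Fin Mp → ℝ) (hαp : ∀ i, 0 < αp i)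
    (xm : Fin Mm → EuclideanSpace ℝ (Fin d)) (αm : Fin Mm → ℝ) (hαm : ∀ j, 0 < αm j)
    (k : EuclideanSpace ℝ (Fin d) → EuclideanSpace ℝ (Fin d) → ℝ)
    (hk : ∀ x y, k x y = η * Real.exp (-γ * ‖x - y‖ ^ 2))
    (F : EuclideanSpace ℝ (Fin d) → ℝ)
    (hF : ∀ x, F x = (∑ i, αp i * k (xp i) x) - (∑ j, αm j * k (xm j) x))
    (β : Fin Mm → ℝ)
    (hβ : ∀ j, β j = (1 / γ) * (Real.log (αm j) - Real.log (∑ i, αp i)))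
    (s₀ : EuclideanSpace ℝ (Fin d))
    (ρbar : Fin Mp → Fin Mm → ℝ)
    (hρbar : ∀ i j, ρbar i j =
      (β j - ‖s₀ - xm j‖ ^ 2 + ‖s₀ - xp i‖ ^ 2) / (2 * ‖xm j - xp i‖))
    (ruStar : ℝ)
    (hruStar : ruStar = ⨅ i, ⨆ j, ρbar i j) :
    (∀ x : EuclideanSpace ℝ (Fin d), ‖x - s₀‖ < ruStar → F x < 0) ∧
      (∀ j₀ : Fin Mm, (⨅ i, ρbar i j₀) ≤ ruStar) := by
  have : Nonempty (Fin Mp) := ⟨⟨0, hMp⟩⟩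
  have : Nonempty (Fin Mm) := ⟨⟨0, hMm⟩⟩
  have hS : 0 < ∑ i, αp i := Finset.sum_pos (fun i _ => hαp i) Finset.univ_nonempty
  refine ⟨fun x hx => ?_, fun j₀ => ?_⟩
  · have hdom : ∀ i, (∑ i, αp i) * k (xp i) x < ∑ j, αm j * k (xm j) x := by
      intro i
      have hsup : ‖x - s₀‖ < ⨆ j, ρbar i j :=
        hx.trans_le (hruStar ▸ ciInf_le (Finite.bddBelow_range _) i)
      obtain ⟨j, hj⟩ := exists_lt_of_lt_ciSup hsup
      rw [hρbar, hβ] at hj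
      have hterm : ∀ j', 0 ≤ αm j' * k (xm j') x := fun j' => by
        rw [hk]; exact mul_nonneg (hαm j').le (by positivity)
      calc (∑ i, αp i) * k (xp i) x < αm j * k (xm j) x := by
            rw [hk, hk]; exact mul_rbf_lt_mul_rbf hη hγ hS (hαm j) hj
        _ ≤ ∑ j, αm j * k (xm j) x :=
            Finset.single_le_sum (fun j' _ => hterm j') (Finset.mem_univ j)
    rw [hF, sub_neg]
    exact Finset.sum_mul_lt_of_forall_sum_mul_lt hαp hdom
  · rw [hruStar]
    exact ciInf_mono (Finite.bddBelow_range _) fun i => le_ciSup (Finite.bddAbove_range _) j₀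

/-- Corollary 2 (min–max version): every point of the open ball of radius
`r_u* = min_i max_j ρ̄(s₀, x⁺ i, x⁻ j)` around `s₀` is free, and for every fixed `j₀`
the radius `r_u = min_i ρ̄(s₀, x⁺ i, x⁻ j₀)` satisfies `r_u ≤ r_u*`. -/
theorem ball_free_ru_star
    (d Mp Mm : ℕ) (hd : 0 < d) (hMp : 0 < Mp) (hMm : 0 < Mm)
    (η γ : ℝ) (hη : 0 < η) (hγ : 0 < γ)
    (xp : Fin Mp → EuclideanSpace ℝ (Fin d)) (αp : Fin Mp → ℝ) (hαp : ∀ i, 0 < αp i)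
    (xm : Fin Mm → EuclideanSpace ℝ (Fin d)) (αm : Fin Mm → ℝ) (hαm : ∀ j, 0 < αm j)
    (k : EuclideanSpace ℝ (Fin d) → EuclideanSpace ℝ (Fin d) → ℝ)
    (hk : ∀ x y, k x y = η * Real.exp (-γ * ‖x - y‖ ^ 2))
    (F : EuclideanSpace ℝ (Fin d) → ℝ)
    (hF : ∀ x, F x = (∑ i, αp i * k (xp i) x) - (∑ j, αm j * k (xm j) x))
    (β : Fin Mm → ℝ)
    (hβ : ∀ j, β j = (1 / γ) * (Real.log (αm j) - Real.log (∑ i, αp i)))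
    (s₀ : EuclideanSpace ℝ (Fin d))
    (hne : ∀ i j, xp i ≠ xm j)
    (ρbar : Fin Mp → Fin Mm → ℝ)
    (hρbar : ∀ i j, ρbar i j =
      (β j - ‖s₀ - xm j‖ ^ 2 + ‖s₀ - xp i‖ ^ 2) / (2 * ‖xm j - xp i‖))
    (ruStar : ℝ)
    (hruStar : ruStar = ⨅ i, ⨆ j, ρbar i j) :
    (∀ x : EuclideanSpace ℝ (Fin d), ‖x - s₀‖ < ruStar → F x < 0) ∧
      (∀ j₀ : Fin Mm, (⨅ i, ρbar i j₀) ≤ ruStar) :=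
  ball_free_ru_star_general d Mp Mm hMp hMm η γ hη hγ xp αp hαp xm αm hαm k hk F hF β hβ s₀ ρbar
    hρbar ruStar hruStar
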